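/- arXiv:1504.01331 — 5 statements merged into one kernel-verified Lean document; each statement's English description precedes it below -/
import Mathlib

section
/- Under the Madelung transformation A(z,T) = √(I(z,T))·exp(i φ(z,T)) with I > 0 and smooth real-valued functions I, φ, the complex PDE ∂A/∂z = iγ( A|A|² + iS ∂_T(A|A|²) − T_R A ∂_T(|A|²) ) is equivalent to the real system ∂I/∂z + 3γS I ∂I/∂T = 0 and ∂φ/∂z + γS I ∂φ/∂T + γT_R ∂I/∂T = γI. -/
/-- partial derivative in `z` of a complex-valued field -/
noncomputable def pdz (f : ℝ × ℝ → ℂ) (p : ℝ × ℝ) : ℂ := deriv (fun z => f (z, p.2)) p.1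
/-- partial derivative in `T` of a complex-valued field -/
noncomputable def pdT (f : ℝ × ℝ → ℂ) (p : ℝ × ℝ) : ℂ := deriv (fun t => f (p.1, t)) p.2
/-- partial derivative in `z` of a real-valued field -/
noncomputable def rpdz (f : ℝ × ℝ → ℝ) (p : ℝ × ℝ) : ℝ := deriv (fun z => f (z, p.2)) p.1
/-- partial derivative in `T` of a real-valued field -/
noncomputable def rpdT (f : ℝ × ℝ → ℝ) (p : ℝ × ℝ) : ℝ := deriv (fun t => f (p.1, t)) p.2

/-- Under the Madelung transformation `A = √I·exp(iφ)` with `I > 0`, the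
complex nonlinear sub-operator equation
`∂_z A = iγ( A|A|² + iS ∂_T(A|A|²) − T_R A ∂_T|A|² )` holds pointwise if and only if
the real system `∂_z I + 3γS I ∂_T I = 0`,
`∂_z φ + γS I ∂_T φ + γT_R ∂_T I = γI` holds pointwise. -/
theorem madelung_equivalence (γ S T_R : ℝ) (I φ : ℝ × ℝ → ℝ)
    (hI : ContDiff ℝ (⊤ : ℕ∞) I) (hφ : ContDiff ℝ (⊤ : ℕ∞) φ) (hIpos : ∀ p, 0 < I p)
    (A : ℝ × ℝ → ℂ)
    (hA : ∀ p, A p = (Real.sqrt (I p) : ℂ) * Complex.exp (Complex.I * (φ p : ℂ))) :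
    (∀ p : ℝ × ℝ,
      pdz A p = Complex.I * (γ : ℂ) *
        (A p * (‖A p‖ : ℂ) ^ 2
         + Complex.I * (S : ℂ) * pdT (fun q => A q * (‖A q‖ : ℂ) ^ 2) p
         - (T_R : ℂ) * A p * pdT (fun q => ((‖A q‖ ^ 2 : ℝ) : ℂ)) p))
    ↔
    (∀ p : ℝ × ℝ,
      rpdz I p + 3 * γ * S * I p * rpdT I p = 0 ∧
      rpdz φ p + γ * S * I p * rpdT φ p + γ * T_R * rpdT I p = γ * I p) := by
  have hIdiff := hI.differentiable (by simp)
  have hφdiff := hφ.differentiable (by simp)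
  have habs : ∀ q, ‖A q‖ = Real.sqrt (I q) := by
    intro q
    rw [hA q, norm_mul, Complex.norm_real, Complex.norm_exp]
    simp [abs_of_nonneg (Real.sqrt_nonneg _)]
  have hsq : ∀ q, ‖A q‖ ^ 2 = I q := fun q => by
    rw [habs q]; exact Real.sq_sqrt (hIpos q).le
  refine forall_congr' fun p => ?_
  have hspos : 0 < Real.sqrt (I p) := Real.sqrt_pos.2 (hIpos p)
  have hs2 : Real.sqrt (I p) ^ 2 = I p := Real.sq_sqrt (hIpos p).le
  have hsne : Real.sqrt (I p) ≠ 0 := hspos.ne'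
  have hEne : Complex.exp (Complex.I * (φ p : ℂ)) ≠ 0 := Complex.exp_ne_zero _
  -- basic one-variable derivatives
  have hIT : HasDerivAt (fun t => I (p.1, t)) (rpdT I p) p.2 := by
    have : DifferentiableAt ℝ (fun t => I (p.1, t)) p.2 := by fun_prop
    exact this.hasDerivAt
  have hφT : HasDerivAt (fun t => φ (p.1, t)) (rpdT φ p) p.2 := by
    have : DifferentiableAt ℝ (fun t => φ (p.1, t)) p.2 := by fun_prop
    exact this.hasDerivAt
  have hIz : HasDerivAt (fun z => I (z, p.2)) (rpdz I p) p.1 := by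
    have : DifferentiableAt ℝ (fun z => I (z, p.2)) p.1 := by fun_prop
    exact this.hasDerivAt
  have hφz : HasDerivAt (fun z => φ (z, p.2)) (rpdz φ p) p.1 := by
    have : DifferentiableAt ℝ (fun z => φ (z, p.2)) p.1 := by fun_prop
    exact this.hasDerivAt
  have hsT : HasDerivAt (fun t => Real.sqrt (I (p.1, t)))
      (rpdT I p / (2 * Real.sqrt (I p))) p.2 := hIT.sqrt (hIpos p).ne'
  have hsz : HasDerivAt (fun z => Real.sqrt (I (z, p.2)))
      (rpdz I p / (2 * Real.sqrt (I p))) p.1 := hIz.sqrt (hIpos p).ne'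
  have hET : HasDerivAt (fun t => Complex.exp (Complex.I * (φ (p.1, t) : ℂ)))
      (Complex.exp (Complex.I * (φ p : ℂ)) * (Complex.I * (rpdT φ p : ℂ))) p.2 := by
    simpa using ((hφT.ofReal_comp.const_mul Complex.I).cexp)
  have hEz : HasDerivAt (fun z => Complex.exp (Complex.I * (φ (z, p.2) : ℂ)))
      (Complex.exp (Complex.I * (φ p : ℂ)) * (Complex.I * (rpdz φ p : ℂ))) p.1 := by
    simpa using ((hφz.ofReal_comp.const_mul Complex.I).cexp)
  -- compute the three partial derivatives appearing in the complex equation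
  have hAz : pdz A p = ((rpdz I p / (2 * Real.sqrt (I p)) : ℝ) : ℂ) *
      Complex.exp (Complex.I * (φ p : ℂ)) +
      ((Real.sqrt (I p) : ℝ) : ℂ) *
        (Complex.exp (Complex.I * (φ p : ℂ)) * (Complex.I * (rpdz φ p : ℂ))) := by
    have hfun : (fun z => A (z, p.2)) =
        fun z => ((Real.sqrt (I (z, p.2)) : ℝ) : ℂ) *
          Complex.exp (Complex.I * (φ (z, p.2) : ℂ)) := funext fun z => hA _
    show deriv (fun z => A (z, p.2)) p.1 = _
    rw [hfun]
    exact ((hsz.ofReal_comp).mul hEz).deriv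
  have hpd1 : pdT (fun q => ((‖A q‖ ^ 2 : ℝ) : ℂ)) p = ((rpdT I p : ℝ) : ℂ) := by
    have hfun : (fun q : ℝ × ℝ => ((‖A q‖ ^ 2 : ℝ) : ℂ)) =
        fun q => ((I q : ℝ) : ℂ) := funext fun q => by rw [hsq q]
    rw [hfun]
    exact hIT.ofReal_comp.deriv
  have hpd2 : pdT (fun q => A q * (‖A q‖ : ℂ) ^ 2) p =
      ((3 * Real.sqrt (I p) ^ 2 * (rpdT I p / (2 * Real.sqrt (I p))) : ℝ) : ℂ) *
        Complex.exp (Complex.I * (φ p : ℂ)) +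
      ((Real.sqrt (I p) ^ 3 : ℝ) : ℂ) *
        (Complex.exp (Complex.I * (φ p : ℂ)) * (Complex.I * (rpdT φ p : ℂ))) := by
    have hfun : (fun q : ℝ × ℝ => A q * (‖A q‖ : ℂ) ^ 2) =
        fun q => ((Real.sqrt (I q) ^ 3 : ℝ) : ℂ) * Complex.exp (Complex.I * (φ q : ℂ)) := by
      funext q
      rw [habs q, hA q]; push_cast; ring
    rw [hfun]
    have := ((hsT.pow 3).ofReal_comp).mul hET
    have h2 := this.deriv
    norm_num at h2 ⊢
    convert h2 using 2
    rfl
  rw [hAz, hpd1, hpd2, habs p, hA p]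
  have hL : ((rpdz I p / (2 * Real.sqrt (I p)) : ℝ) : ℂ) * Complex.exp (Complex.I * (φ p : ℂ)) +
      ((Real.sqrt (I p) : ℝ) : ℂ) *
        (Complex.exp (Complex.I * (φ p : ℂ)) * (Complex.I * (rpdz φ p : ℂ))) =
      (((rpdz I p / (2 * Real.sqrt (I p)) : ℝ) : ℂ) +
        ((Real.sqrt (I p) * rpdz φ p : ℝ) : ℂ) * Complex.I) *
        Complex.exp (Complex.I * (φ p : ℂ)) := by
    push_cast; ring
  have hR : Complex.I * (γ : ℂ) *
      (((Real.sqrt (I p) : ℝ) : ℂ) * Complex.exp (Complex.I * (φ p : ℂ)) *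
          ((Real.sqrt (I p) : ℝ) : ℂ) ^ 2 +
        Complex.I * (S : ℂ) *
          (((3 * Real.sqrt (I p) ^ 2 * (rpdT I p / (2 * Real.sqrt (I p))) : ℝ) : ℂ) *
              Complex.exp (Complex.I * (φ p : ℂ)) +
            ((Real.sqrt (I p) ^ 3 : ℝ) : ℂ) *
              (Complex.exp (Complex.I * (φ p : ℂ)) * (Complex.I * (rpdT φ p : ℂ)))) -
        (T_R : ℂ) * (((Real.sqrt (I p) : ℝ) : ℂ) * Complex.exp (Complex.I * (φ p : ℂ))) *
          ((rpdT I p : ℝ) : ℂ)) =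
      (((γ * (-(3 / 2) * S * Real.sqrt (I p) * rpdT I p) : ℝ) : ℂ) +
        ((γ * (Real.sqrt (I p) ^ 3 - S * Real.sqrt (I p) ^ 3 * rpdT φ p -
            T_R * Real.sqrt (I p) * rpdT I p) : ℝ) : ℂ) * Complex.I) *
        Complex.exp (Complex.I * (φ p : ℂ)) := by
    have h3 : (3 : ℝ) * Real.sqrt (I p) ^ 2 * (rpdT I p / (2 * Real.sqrt (I p))) =
        3 / 2 * Real.sqrt (I p) * rpdT I p := by
      field_simp
    rw [h3]; push_cast
    linear_combination (((γ : ℂ) * (Real.sqrt (I p) : ℂ) * Complex.exp (Complex.I * (φ p : ℂ)) *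
      (S : ℂ) * ((3 / 2) * (rpdT I p : ℂ) + Complex.I * ((Real.sqrt (I p) : ℂ)) ^ 2 *
        (rpdT φ p : ℂ)))) * Complex.I_sq
  rw [hL, hR, mul_left_inj' hEne, Complex.ext_iff]
  simp only [Complex.add_re, Complex.add_im, Complex.ofReal_re, Complex.ofReal_im,
    Complex.mul_re, Complex.mul_im, Complex.I_re, Complex.I_im, mul_zero, mul_one,
    zero_mul, sub_zero, zero_add, add_zero, zero_sub, neg_zero]
  constructor
  · rintro ⟨h1, h2⟩
    rw [div_eq_iff (by positivity : (2 : ℝ) * Real.sqrt (I p) ≠ 0)] at h1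
    refine ⟨by linear_combination h1 - 3 * γ * S * rpdT I p * hs2, ?_⟩
    have h2' : rpdz φ p = γ * (Real.sqrt (I p) ^ 2 - S * Real.sqrt (I p) ^ 2 * rpdT φ p -
        T_R * rpdT I p) :=
      mul_left_cancel₀ hsne (by linear_combination h2)
    rw [hs2] at h2'
    rw [h2']; ring
  · rintro ⟨h1, h2⟩
    constructor
    · rw [div_eq_iff (by positivity : (2 : ℝ) * Real.sqrt (I p) ≠ 0)]
      linear_combination h1 + 3 * γ * S * rpdT I p * hs2
    · linear_combination Real.sqrt (I p) * h2 +
        (γ * S * Real.sqrt (I p) * rpdT φ p - γ * Real.sqrt (I p)) * hs2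
end

section
/- First-order upwind scheme for the decoupled intensity update: if γ > 0, S ≥ 0, I_j^n ≥ 0 for all j, and the CFL condition 3γS·max_j{I_j^n}·(h/ΔT) ≤ 1 holds, then the updated values I_j^{n+1} = I_j^n − (h/ΔT)·3γS·((I_j^n + I_{j-1}^n)/2)·(I_j^n − I_{j-1}^n) satisfy min_j I_j^n ≤ I_j^{n+1} ≤ max_j I_j^n for all j (the scheme is maximum-principle preserving). -/
/-- The first-order upwind scheme for the decoupled intensity update is
maximum-principle preserving: under `γ > 0`, `S ≥ 0`, nonnegative data and the CFL
condition `3γS·max_j I_j·(h/ΔT) ≤ 1`, the updated values stay between the old min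
and max. Periodic indexing is modeled by `j : ZMod n`. -/
theorem upwind_maximum_principle (n : ℕ) [NeZero n] (γ S h ΔT : ℝ)
    (hγ : 0 < γ) (hS : 0 ≤ S) (hh : 0 < h) (hΔT : 0 < ΔT)
    (I : ZMod n → ℝ) (hpos : ∀ j, 0 ≤ I j)
    (hCFL : 3 * γ * S * (Finset.univ.sup' Finset.univ_nonempty I) * (h / ΔT) ≤ 1) :
    ∀ j : ZMod n,
      Finset.univ.inf' Finset.univ_nonempty I ≤
        I j - (h / ΔT) * (3 * γ * S) * ((I j + I (j - 1)) / 2) * (I j - I (j - 1)) ∧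
      I j - (h / ΔT) * (3 * γ * S) * ((I j + I (j - 1)) / 2) * (I j - I (j - 1)) ≤
        Finset.univ.sup' Finset.univ_nonempty I := by
  set M := Finset.univ.sup' Finset.univ_nonempty I with hMdef
  set m := Finset.univ.inf' Finset.univ_nonempty I with hmdef
  have hM : ∀ j, I j ≤ M := fun j => Finset.le_sup' I (Finset.mem_univ j)
  have hm : ∀ j, m ≤ I j := fun j => Finset.inf'_le I (Finset.mem_univ j)
  intro j
  set a := I j with ha
  set b := I (j - 1) with hb
  have ha0 : 0 ≤ a := hpos j
  have hb0 : 0 ≤ b := hpos (j - 1)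
  have haM : a ≤ M := hM j
  have hbM : b ≤ M := hM (j - 1)
  have ham : m ≤ a := hm j
  have hbm : m ≤ b := hm (j - 1)
  have hc0 : 0 ≤ h / ΔT * (3 * γ * S) := by positivity
  have hcM : h / ΔT * (3 * γ * S) * M ≤ 1 := by nlinarith
  set c := h / ΔT * (3 * γ * S) with hcdef
  have hlam1 : c * ((a + b) / 2) ≤ 1 := by nlinarith
  have hlam0 : 0 ≤ c * ((a + b) / 2) := by positivity
  constructor
  · nlinarith [mul_nonneg (sub_nonneg.2 hlam1) (sub_nonneg.2 ham),
      mul_nonneg hlam0 (sub_nonneg.2 hbm)]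
  · nlinarith [mul_nonneg (sub_nonneg.2 hlam1) (sub_nonneg.2 haM),
      mul_nonneg hlam0 (sub_nonneg.2 hbM)]
end

section
/- Under the hypotheses γ > 0, S ≥ 0, all I_j^n ≥ 0, and the CFL condition 3γS·max_j{I_j^n}·(h/ΔT) ≤ 1, the upwind intensity update I_j^{n+1} = I_j^n − (h/ΔT)·3γS·((I_j^n+I_{j-1}^n)/2)·(I_j^n − I_{j-1}^n) preserves nonnegativity: I_j^{n+1} ≥ 0 for all j. -/
/-- Under `γ > 0`, `S ≥ 0`, nonnegative data and the CFL condition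
`3γS·max_j I_j·(h/ΔT) ≤ 1`, the upwind intensity update preserves nonnegativity.
Periodic indexing is modeled by `j : ZMod n`. -/
theorem upwind_nonnegativity (n : ℕ) [NeZero n] (γ S h ΔT : ℝ)
    (hγ : 0 < γ) (hS : 0 ≤ S) (hh : 0 < h) (hΔT : 0 < ΔT)
    (I : ZMod n → ℝ) (hpos : ∀ j, 0 ≤ I j)
    (hCFL : 3 * γ * S * (Finset.univ.sup' Finset.univ_nonempty I) * (h / ΔT) ≤ 1) :
    ∀ j : ZMod n,
      0 ≤ I j - (h / ΔT) * (3 * γ * S) * ((I j + I (j - 1)) / 2) * (I j - I (j - 1)) := by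
  intro j
  set a := I j with ha
  set b := I (j - 1) with hb
  have ha0 : 0 ≤ a := hpos j
  have hb0 : 0 ≤ b := hpos (j - 1)
  have haM : a ≤ Finset.univ.sup' Finset.univ_nonempty I :=
    Finset.le_sup' I (Finset.mem_univ j)
  have hc0 : 0 ≤ h / ΔT * (3 * γ * S) := by positivity
  have key : h / ΔT * (3 * γ * S) * a ≤ 1 := by nlinarith
  nlinarith [mul_nonneg hc0 (mul_nonneg hb0 hb0), mul_nonneg (sub_nonneg.mpr key) ha0]
end

section
/- Madelung transformation for the two-mode nonlinear sub-operator: with A_k = √(I_k)·exp(iφ_k) for k=1,2 (I_k > 0), the coupled complex system ∂A_k/∂z = iγ_k(|A_k|²+C_k|A_l|²)A_k − γ_k S_k[∂_T(|A_k|²A_k) + B_k ∂_T(|A_l|²A_k)] − iγ_k T_R[∂_T|A_k|² + B_k ∂_T|A_l|²]A_k (l ≠ k) is equivalent to the real system ∂I_k/∂z + γ_k S_k[(3I_k + B_k I_l)∂_T I_k + 2B_k I_k ∂_T I_l] = 0 and ∂φ_k/∂z + γ_k S_k(I_k + B_k I_l)∂_T φ_k + γ_k T_R[∂_T I_k + B_k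 ∂_T I_l] = γ_k(I_k + C_k I_l). -/
/-- The complex nonlinear sub-operator equation for field `A_k` coupled to `A_l`. -/
def ComplexEq (γ S B C T_R : ℝ) (Ak Al : ℝ × ℝ → ℂ) : Prop :=
  ∀ p : ℝ × ℝ,
    pdz Ak p =
      Complex.I * (γ : ℂ) *
          (((‖Ak p‖ : ℂ) ^ 2 + (C : ℂ) * (‖Al p‖ : ℂ) ^ 2) * Ak p)
      - (γ : ℂ) * (S : ℂ) *
          (pdT (fun q => (‖Ak q‖ : ℂ) ^ 2 * Ak q) p
           + (B : ℂ) * pdT (fun q => (‖Al q‖ : ℂ) ^ 2 * Ak q) p)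
      - Complex.I * (γ : ℂ) * (T_R : ℂ) *
          ((pdT (fun q => ((‖Ak q‖ ^ 2 : ℝ) : ℂ)) p
            + (B : ℂ) * pdT (fun q => ((‖Al q‖ ^ 2 : ℝ) : ℂ)) p) * Ak p)

/-- The real intensity/phase transport equations for field `k` coupled to field `l`. -/
def RealEq (γ S B C T_R : ℝ) (Ik φk Il : ℝ × ℝ → ℝ) : Prop :=
  ∀ p : ℝ × ℝ,
    rpdz Ik p + γ * S * ((3 * Ik p + B * Il p) * rpdT Ik p + 2 * B * Ik p * rpdT Il p) = 0 ∧
    rpdz φk p + γ * S * (Ik p + B * Il p) * rpdT φk p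
        + γ * T_R * (rpdT Ik p + B * rpdT Il p) = γ * (Ik p + C * Il p)

lemma madelung_hasDerivAt {i f : ℝ → ℝ} {i' f' : ℝ} {x : ℝ}
    (hi : HasDerivAt i i' x) (hf : HasDerivAt f f' x) (hpos : 0 < i x) :
    HasDerivAt (fun t => ((Real.sqrt (i t) : ℂ)) * Complex.exp (Complex.I * (f t : ℂ)))
      ((((i' / (2 * i x) : ℝ) : ℂ) + Complex.I * (f' : ℂ)) *
        (((Real.sqrt (i x) : ℂ)) * Complex.exp (Complex.I * (f x : ℂ)))) x := by
  have hs : HasDerivAt (fun t => ((Real.sqrt (i t) : ℝ) : ℂ))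
      ((i' / (2 * Real.sqrt (i x)) : ℝ) : ℂ) x := (hi.sqrt hpos.ne').ofReal_comp
  have he : HasDerivAt (fun t => Complex.exp (Complex.I * (f t : ℂ)))
      (Complex.exp (Complex.I * (f x : ℂ)) * (Complex.I * (f' : ℂ))) x := by
    have h1 : HasDerivAt (fun t : ℝ => Complex.I * ((f t : ℝ) : ℂ)) (Complex.I * (f' : ℂ)) x :=
      (hf.ofReal_comp).const_mul Complex.I
    simpa using h1.cexp
  have := hs.mul he
  refine this.congr_deriv ?_
  have hsq : Real.sqrt (i x) ≠ 0 := by positivity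
  have hsqC : (Real.sqrt (i x) : ℂ) ≠ 0 := by exact_mod_cast hsq
  have hix2 : ((i x : ℝ) : ℂ) = (Real.sqrt (i x) : ℂ) ^ 2 := by
    norm_cast
    exact (Real.sq_sqrt hpos.le).symm
  push_cast
  rw [hix2]
  field_simp

lemma madelung_mul_hasDerivAt {m i f : ℝ → ℝ} {m' i' f' : ℝ} {x : ℝ}
    (hm : HasDerivAt m m' x) (hi : HasDerivAt i i' x) (hf : HasDerivAt f f' x) (hpos : 0 < i x) :
    HasDerivAt (fun t => ((m t : ℂ)) * (((Real.sqrt (i t) : ℂ)) * Complex.exp (Complex.I * (f t : ℂ))))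
      ((((m' : ℂ)) + (m x : ℂ) * (((i' / (2 * i x) : ℝ) : ℂ) + Complex.I * (f' : ℂ))) *
        (((Real.sqrt (i x) : ℂ)) * Complex.exp (Complex.I * (f x : ℂ)))) x := by
  have := hm.ofReal_comp.mul (madelung_hasDerivAt hi hf hpos)
  refine this.congr_deriv ?_
  ring

lemma abs_madelung (i φ : ℝ) (h : 0 ≤ i) :
    ‖(Real.sqrt i : ℂ) * Complex.exp (Complex.I * (φ : ℂ))‖ ^ 2 = i := by
  have hre : (Complex.I * (φ : ℂ)).re = 0 := by simp
  rw [norm_mul, Complex.norm_real, Real.norm_eq_abs, Complex.norm_exp, hre, Real.exp_zero, mul_one,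
    _root_.abs_of_nonneg (Real.sqrt_nonneg i), Real.sq_sqrt h]

lemma key_iff (γ S B C T_R : ℝ) (Ik φk Il φl : ℝ × ℝ → ℝ)
    (hIk : ContDiff ℝ (⊤ : ℕ∞) Ik) (hIl : ContDiff ℝ (⊤ : ℕ∞) Il)
    (hφk : ContDiff ℝ (⊤ : ℕ∞) φk)
    (hIkpos : ∀ p, 0 < Ik p) (hIlpos : ∀ p, 0 < Il p)
    (Ak Al : ℝ × ℝ → ℂ)
    (hAk : ∀ p, Ak p = (Real.sqrt (Ik p) : ℂ) * Complex.exp (Complex.I * (φk p : ℂ)))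
    (hAl : ∀ p, Al p = (Real.sqrt (Il p) : ℂ) * Complex.exp (Complex.I * (φl p : ℂ))) :
    ComplexEq γ S B C T_R Ak Al ↔ RealEq γ S B C T_R Ik φk Il := by
  unfold ComplexEq RealEq
  apply forall_congr'
  rintro ⟨z, t⟩
  set p : ℝ × ℝ := (z, t) with hp
  -- slice differentiability
  have slicez : ∀ (F : ℝ × ℝ → ℝ), ContDiff ℝ (⊤ : ℕ∞) F →
      HasDerivAt (fun u => F (u, t)) (rpdz F p) z := by
    intro F hF
    have hd : DifferentiableAt ℝ (fun u => F (u, t)) z :=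
      ((hF.differentiable (by simp)) (z, t)).comp z
        (differentiableAt_id.prodMk (differentiableAt_const _))
    exact hd.hasDerivAt
  have sliceT : ∀ (F : ℝ × ℝ → ℝ), ContDiff ℝ (⊤ : ℕ∞) F →
      HasDerivAt (fun u => F (z, u)) (rpdT F p) t := by
    intro F hF
    have hd : DifferentiableAt ℝ (fun u => F (z, u)) t :=
      ((hF.differentiable (by simp)) (z, t)).comp t
        ((differentiableAt_const _).prodMk differentiableAt_id)
    exact hd.hasDerivAt
  set a := rpdz Ik p
  set b := rpdT Ik p
  set c := rpdz φk p
  set d := rpdT φk p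
  set e := rpdT Il p
  have hi := hIkpos p
  have hil := hIlpos p
  have habsk : ∀ q, (‖Ak q‖) ^ 2 = Ik q := by
    intro q; rw [hAk q]; exact abs_madelung _ _ (hIkpos q).le
  have habsl : ∀ q, (‖Al q‖) ^ 2 = Il q := by
    intro q; rw [hAl q]; exact abs_madelung _ _ (hIlpos q).le
  have hAkp : Ak p = (Real.sqrt (Ik p) : ℂ) * Complex.exp (Complex.I * (φk p : ℂ)) := hAk p
  have hAkne : Ak p ≠ 0 := by
    rw [hAkp]
    apply mul_ne_zero
    · exact_mod_cast (Real.sqrt_pos.mpr hi).ne'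
    · exact Complex.exp_ne_zero _
  -- e1 : pdz Ak p
  have e1 : pdz Ak p = (((a / (2 * Ik p) : ℝ) : ℂ) + Complex.I * (c : ℂ)) * Ak p := by
    have hfun : (fun u => Ak (u, t)) =
        fun u => ((Real.sqrt (Ik (u, t)) : ℂ)) * Complex.exp (Complex.I * ((φk (u, t) : ℝ) : ℂ)) :=
      funext fun u => hAk _
    rw [show pdz Ak p = deriv (fun u => Ak (u, t)) z from rfl, hfun,
      (madelung_hasDerivAt (slicez Ik hIk) (slicez φk hφk) hi).deriv, hAkp]
  -- e2
  have e2 : pdT (fun q => ((‖Ak q‖ : ℝ) : ℂ) ^ 2 * Ak q) p =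
      (((b : ℝ) : ℂ) + ((Ik p : ℝ) : ℂ) * (((b / (2 * Ik p) : ℝ) : ℂ) + Complex.I * (d : ℂ))) * Ak p := by
    have hfun : (fun u => ((‖Ak (z, u)‖ : ℝ) : ℂ) ^ 2 * Ak (z, u)) =
        fun u => ((Ik (z, u) : ℝ) : ℂ) *
          (((Real.sqrt (Ik (z, u)) : ℂ)) * Complex.exp (Complex.I * ((φk (z, u) : ℝ) : ℂ))) := by
      funext u
      rw [← Complex.ofReal_pow, habsk, hAk]
    rw [show pdT (fun q => ((‖Ak q‖ : ℝ) : ℂ) ^ 2 * Ak q) p =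
        deriv (fun u => ((‖Ak (z, u)‖ : ℝ) : ℂ) ^ 2 * Ak (z, u)) t from rfl, hfun,
      (madelung_mul_hasDerivAt (sliceT Ik hIk) (sliceT Ik hIk) (sliceT φk hφk) hi).deriv, hAkp]
  -- e3
  have e3 : pdT (fun q => ((‖Al q‖ : ℝ) : ℂ) ^ 2 * Ak q) p =
      (((e : ℝ) : ℂ) + ((Il p : ℝ) : ℂ) * (((b / (2 * Ik p) : ℝ) : ℂ) + Complex.I * (d : ℂ))) * Ak p := by
    have hfun : (fun u => ((‖Al (z, u)‖ : ℝ) : ℂ) ^ 2 * Ak (z, u)) =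
        fun u => ((Il (z, u) : ℝ) : ℂ) *
          (((Real.sqrt (Ik (z, u)) : ℂ)) * Complex.exp (Complex.I * ((φk (z, u) : ℝ) : ℂ))) := by
      funext u
      rw [← Complex.ofReal_pow, habsl, hAk]
    rw [show pdT (fun q => ((‖Al q‖ : ℝ) : ℂ) ^ 2 * Ak q) p =
        deriv (fun u => ((‖Al (z, u)‖ : ℝ) : ℂ) ^ 2 * Ak (z, u)) t from rfl, hfun,
      (madelung_mul_hasDerivAt (sliceT Il hIl) (sliceT Ik hIk) (sliceT φk hφk) hi).deriv, hAkp]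
  -- e4
  have e4 : pdT (fun q => ((‖Ak q‖ ^ 2 : ℝ) : ℂ)) p = ((b : ℝ) : ℂ) := by
    have hfun : (fun u => ((‖Ak (z, u)‖ ^ 2 : ℝ) : ℂ)) =
        fun u => ((Ik (z, u) : ℝ) : ℂ) := by
      funext u; rw [habsk]
    rw [show pdT (fun q => ((‖Ak q‖ ^ 2 : ℝ) : ℂ)) p =
        deriv (fun u => ((‖Ak (z, u)‖ ^ 2 : ℝ) : ℂ)) t from rfl, hfun,
      ((sliceT Ik hIk).ofReal_comp).deriv]
  have e5 : pdT (fun q => ((‖Al q‖ ^ 2 : ℝ) : ℂ)) p = ((e : ℝ) : ℂ) := by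
    have hfun : (fun u => ((‖Al (z, u)‖ ^ 2 : ℝ) : ℂ)) =
        fun u => ((Il (z, u) : ℝ) : ℂ) := by
      funext u; rw [habsl]
    rw [show pdT (fun q => ((‖Al q‖ ^ 2 : ℝ) : ℂ)) p =
        deriv (fun u => ((‖Al (z, u)‖ ^ 2 : ℝ) : ℂ)) t from rfl, hfun,
      ((sliceT Il hIl).ofReal_comp).deriv]
  rw [e1, e2, e3, e4, e5]
  have habskp : (‖Ak p‖ : ℂ) ^ 2 = ((Ik p : ℝ) : ℂ) := by
    rw [← Complex.ofReal_pow]; exact_mod_cast congrArg (Complex.ofReal) (habsk p)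
  have habslp : (‖Al p‖ : ℂ) ^ 2 = ((Il p : ℝ) : ℂ) := by
    rw [← Complex.ofReal_pow]; exact_mod_cast congrArg (Complex.ofReal) (habsl p)
  rw [habskp, habslp]
  -- collect RHS as (X + I Y) * Ak p
  set X : ℝ := -(γ * S) * (b + Ik p * (b / (2 * Ik p)) + B * (e + Il p * (b / (2 * Ik p)))) with hX
  set Y : ℝ := γ * (Ik p + C * Il p) - γ * S * (Ik p * d + B * Il p * d) - γ * T_R * (b + B * e)
    with hY
  have hRHS :
      Complex.I * (γ : ℂ) * ((((Ik p : ℝ) : ℂ) + (C : ℂ) * ((Il p : ℝ) : ℂ)) * Ak p)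
      - (γ : ℂ) * (S : ℂ) *
          ((((b : ℝ) : ℂ) + ((Ik p : ℝ) : ℂ) * (((b / (2 * Ik p) : ℝ) : ℂ) + Complex.I * (d : ℂ))) * Ak p
           + (B : ℂ) * ((((e : ℝ) : ℂ) + ((Il p : ℝ) : ℂ) * (((b / (2 * Ik p) : ℝ) : ℂ) + Complex.I * (d : ℂ))) * Ak p))
      - Complex.I * (γ : ℂ) * (T_R : ℂ) * ((((b : ℝ) : ℂ) + (B : ℂ) * ((e : ℝ) : ℂ)) * Ak p)
      = (((X : ℝ) : ℂ) + Complex.I * ((Y : ℝ) : ℂ)) * Ak p := by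
    rw [hX, hY]
    push_cast
    ring
  rw [hRHS, mul_left_inj' hAkne]
  have hext : ∀ x y u v : ℝ, (((x : ℝ) : ℂ) + Complex.I * ((y : ℝ) : ℂ)
      = ((u : ℝ) : ℂ) + Complex.I * ((v : ℝ) : ℂ)) ↔ (x = u ∧ y = v) := by
    intro x y u v
    constructor
    · intro h
      have hre := congrArg Complex.re h
      have him := congrArg Complex.im h
      simp at hre him
      exact ⟨hre, him⟩
    · rintro ⟨rfl, rfl⟩; rfl
  rw [hext]
  have hi0 : Ik p ≠ 0 := hi.ne'
  constructor
  · rintro ⟨h1, h2⟩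
    constructor
    · rw [hX] at h1
      field_simp at h1
      linear_combination h1
    · rw [hY] at h2; linarith [h2]
  · rintro ⟨h1, h2⟩
    constructor
    · rw [hX]
      field_simp
      linear_combination h1
    · rw [hY]; linarith [h2]

/-- Madelung transformation for the two-mode nonlinear sub-operator:
with `A_k = √(I_k)·exp(iφ_k)` (`I_k > 0`), the coupled complex system holds pointwise
if and only if the real intensity/phase system holds pointwise. -/
theorem two_mode_madelung_equivalence (γ₁ γ₂ S₁ S₂ B₁ B₂ C₁ C₂ T_R : ℝ)
    (I₁ I₂ φ₁ φ₂ : ℝ × ℝ → ℝ)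
    (hI₁ : ContDiff ℝ (⊤ : ℕ∞) I₁) (hI₂ : ContDiff ℝ (⊤ : ℕ∞) I₂)
    (hφ₁ : ContDiff ℝ (⊤ : ℕ∞) φ₁) (hφ₂ : ContDiff ℝ (⊤ : ℕ∞) φ₂)
    (hI₁pos : ∀ p, 0 < I₁ p) (hI₂pos : ∀ p, 0 < I₂ p)
    (A₁ A₂ : ℝ × ℝ → ℂ)
    (hA₁ : ∀ p, A₁ p = (Real.sqrt (I₁ p) : ℂ) * Complex.exp (Complex.I * (φ₁ p : ℂ)))
    (hA₂ : ∀ p, A₂ p = (Real.sqrt (I₂ p) : ℂ) * Complex.exp (Complex.I * (φ₂ p : ℂ))) :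
    (ComplexEq γ₁ S₁ B₁ C₁ T_R A₁ A₂ ∧ ComplexEq γ₂ S₂ B₂ C₂ T_R A₂ A₁)
      ↔
    (RealEq γ₁ S₁ B₁ C₁ T_R I₁ φ₁ I₂ ∧ RealEq γ₂ S₂ B₂ C₂ T_R I₂ φ₂ I₁) := by
  rw [key_iff γ₁ S₁ B₁ C₁ T_R I₁ φ₁ I₂ φ₂ hI₁ hI₂ hφ₁ hI₁pos hI₂pos A₁ A₂ hA₁ hA₂,
    key_iff γ₂ S₂ B₂ C₂ T_R I₂ φ₂ I₁ φ₁ hI₂ hI₁ hφ₂ hI₂pos hI₁pos A₂ A₁ hA₂ hA₁]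
end

section
/- Second-order accuracy of Strang splitting: if D and N are bounded linear operators on a Banach space, then ‖exp(h(D+N)) − exp((h/2)D)exp(hN)exp((h/2)D)‖ ≤ C h³ for all 0 ≤ h ≤ 1, with C depending only on ‖D‖ and ‖N‖. -/
/-!
With `A = X + Y + X` (here `X = D / 2`, `Y = N`), the error
`F t = exp (t • A) - exp (t • X) * exp (t • Y) * exp (t • X)` is smooth, and its derivatives are
explicit: differentiating the product `k` times gives a sum over the `3 ^ k` ways of letting each
differentiation act on one of the three factors. At `t = 0` this sum equals `A ^ k` for `k ≤ 2`
because the splitting is symmetric, so `F`, `F'` and `F''` vanish at `0`. The third derivative is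
bounded on `[0, 1]` in terms of `‖X‖ + ‖Y‖ + ‖X‖ = ‖D‖ + ‖N‖` alone, and three applications of the
mean value inequality give `‖F h‖ ≤ C h ^ 3`.
-/

open NormedSpace Set

section Calculus

variable {E : Type*} [NormedAddCommGroup E] [NormedSpace ℝ E]

theorem norm_le_mul_of_hasDerivWithinAt_of_eq_zero {f f' : ℝ → E} {C h : ℝ}
    (hf : ∀ t ∈ Icc 0 h, HasDerivWithinAt f (f' t) (Icc 0 h) t) (hf0 : f 0 = 0)
    (bound : ∀ t ∈ Icc 0 h, ‖f' t‖ ≤ C) : ∀ t ∈ Icc 0 h, ‖f t‖ ≤ C * h := by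
  intro t ht
  have hC : 0 ≤ C := (norm_nonneg _).trans (bound t ht)
  have hmvt := norm_image_sub_le_of_norm_deriv_le_segment' hf
    (fun x hx => bound x (Ico_subset_Icc_self hx)) t ht
  rw [hf0, sub_zero, sub_zero] at hmvt
  exact hmvt.trans (mul_le_mul_of_nonneg_left ht.2 hC)

theorem norm_le_mul_pow_three_of_hasDerivAt {f₀ f₁ f₂ f₃ : ℝ → E} {M h : ℝ}
    (d₀ : ∀ t, HasDerivAt f₀ (f₁ t) t) (d₁ : ∀ t, HasDerivAt f₁ (f₂ t) t)
    (d₂ : ∀ t, HasDerivAt f₂ (f₃ t) t) (z₀ : f₀ 0 = 0) (z₁ : f₁ 0 = 0) (z₂ : f₂ 0 = 0)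
    (hh : 0 ≤ h) (bound : ∀ t ∈ Icc 0 h, ‖f₃ t‖ ≤ M) : ‖f₀ h‖ ≤ M * h ^ 3 := by
  have b₂ := norm_le_mul_of_hasDerivWithinAt_of_eq_zero
    (fun t _ => (d₂ t).hasDerivWithinAt) z₂ bound
  have b₁ := norm_le_mul_of_hasDerivWithinAt_of_eq_zero
    (fun t _ => (d₁ t).hasDerivWithinAt) z₁ b₂
  have b₀ := norm_le_mul_of_hasDerivWithinAt_of_eq_zero
    (fun t _ => (d₀ t).hasDerivWithinAt) z₀ b₁
  calc ‖f₀ h‖ ≤ M * h * h * h := b₀ h (right_mem_Icc.2 hh)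
    _ = M * h ^ 3 := by ring

end Calculus

section NormedRing

variable {𝔸 : Type*} [NormedRing 𝔸]

theorem norm_pow_le_max_mul (x : 𝔸) (n : ℕ) : ‖x ^ n‖ ≤ max ‖(1 : 𝔸)‖ 1 * ‖x‖ ^ n := by
  rcases n.eq_zero_or_pos with rfl | hn
  · simp
  · exact (norm_pow_le' x hn).trans (le_mul_of_one_le_left (by positivity) (le_max_right _ _))

theorem norm_pow_mul_le (x a : 𝔸) (n : ℕ) : ‖x ^ n * a‖ ≤ ‖x‖ ^ n * ‖a‖ := by
  induction n with
  | zero => simp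
  | succ n ih =>
    rw [pow_succ', mul_assoc, pow_succ', mul_assoc]
    exact (norm_mul_le _ _).trans (mul_le_mul_of_nonneg_left ih (norm_nonneg _))

theorem norm_mul_pow_le (a x : 𝔸) (n : ℕ) : ‖a * x ^ n‖ ≤ ‖a‖ * ‖x‖ ^ n := by
  induction n with
  | zero => simp
  | succ n ih =>
    rw [pow_succ, ← mul_assoc, pow_succ, ← mul_assoc]
    exact (norm_mul_le _ _).trans (mul_le_mul_of_nonneg_right ih (norm_nonneg _))

end NormedRing

section NormedAlgebra

variable {𝔸 : Type*} [NormedRing 𝔸] [NormedAlgebra ℝ 𝔸]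

-- A `NormedRing` need not have `‖1‖ = 1`, hence the `max`.
noncomputable def expNormBound (𝔸 : Type*) [Norm 𝔸] [One 𝔸] (c : ℝ) : ℝ :=
  max ‖(1 : 𝔸)‖ 1 * Real.exp c

theorem norm_exp_le_expNormBound (x : 𝔸) : ‖exp x‖ ≤ expNormBound 𝔸 ‖x‖ := by
  rw [exp_eq_tsum ℝ, expNormBound, Real.exp_eq_exp_ℝ]
  refine tsum_of_norm_bounded ((expSeries_div_hasSum_exp ‖x‖).mul_left _) fun n => ?_
  rw [norm_smul, Real.norm_of_nonneg (by positivity), mul_div_assoc', mul_comm, div_eq_mul_inv]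
  exact mul_le_mul_of_nonneg_right (norm_pow_le_max_mul x n) (by positivity)

theorem norm_exp_smul_le_expNormBound {x : 𝔸} {t c : ℝ} (ht : |t| ≤ 1) (hx : ‖x‖ ≤ c) :
    ‖exp (t • x)‖ ≤ expNormBound 𝔸 c := by
  refine (norm_exp_le_expNormBound _).trans ?_
  rw [expNormBound, expNormBound, norm_smul, Real.norm_eq_abs]
  gcongr
  exact (mul_le_of_le_one_left (norm_nonneg x) ht).trans hx

end NormedAlgebra

section TripleExp

variable {𝔸 : Type*} [NormedRing 𝔸] [NormedAlgebra ℝ 𝔸]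

theorem hasDerivAt_pow_mul_exp_smul [CompleteSpace 𝔸] (X : 𝔸) (i : ℕ) (t : ℝ) :
    HasDerivAt (fun s : ℝ => X ^ i * exp (s • X)) (X ^ (i + 1) * exp (t • X)) t := by
  convert (hasDerivAt_exp_smul_const' X t).const_mul (X ^ i) using 1
  rw [pow_succ, mul_assoc]

theorem hasDerivAt_exp_smul_mul_pow [CompleteSpace 𝔸] (X : 𝔸) (l : ℕ) (t : ℝ) :
    HasDerivAt (fun s : ℝ => exp (s • X) * X ^ l) (exp (t • X) * X ^ (l + 1)) t := by
  convert (hasDerivAt_exp_smul_const X t).mul_const (X ^ l) using 1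
  rw [pow_succ', mul_assoc]

/-- The `k`-th derivative of
`t ↦ X ^ i * exp (t • X) * Y ^ j * exp (t • Y) * exp (t • Z) * Z ^ l`. -/
noncomputable def tripleExpDeriv (X Y Z : 𝔸) : ℕ → ℕ → ℕ → ℕ → ℝ → 𝔸
  | 0, i, j, l, t => X ^ i * exp (t • X) * (Y ^ j * exp (t • Y)) * (exp (t • Z) * Z ^ l)
  | k + 1, i, j, l, t =>
    tripleExpDeriv X Y Z k (i + 1) j l t + tripleExpDeriv X Y Z k i (j + 1) l t +
      tripleExpDeriv X Y Z k i j (l + 1) t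

theorem hasDerivAt_tripleExpDeriv [CompleteSpace 𝔸] (X Y Z : 𝔸) (k i j l : ℕ) (t : ℝ) :
    HasDerivAt (tripleExpDeriv X Y Z k i j l) (tripleExpDeriv X Y Z (k + 1) i j l t) t := by
  induction k generalizing i j l with
  | zero =>
    convert ((hasDerivAt_pow_mul_exp_smul X i t).mul (hasDerivAt_pow_mul_exp_smul Y j t)).mul
      (hasDerivAt_exp_smul_mul_pow Z l t) using 1
    · rfl
    · simp only [tripleExpDeriv, Pi.mul_apply]
      noncomm_ring
  | succ k ih =>
    exact ((ih (i + 1) j l).add (ih i (j + 1) l)).add (ih i j (l + 1))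

theorem norm_tripleExpDeriv_le (X Y Z : 𝔸) (k i j l : ℕ) (t : ℝ) :
    ‖tripleExpDeriv X Y Z k i j l t‖ ≤ ‖X‖ ^ i * ‖Y‖ ^ j * ‖Z‖ ^ l *
      (‖X‖ + ‖Y‖ + ‖Z‖) ^ k * (‖exp (t • X)‖ * ‖exp (t • Y)‖ * ‖exp (t • Z)‖) := by
  induction k generalizing i j l with
  | zero =>
    calc ‖tripleExpDeriv X Y Z 0 i j l t‖
        ≤ ‖X ^ i * exp (t • X)‖ * ‖Y ^ j * exp (t • Y)‖ * ‖exp (t • Z) * Z ^ l‖ :=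
          (norm_mul_le _ _).trans (mul_le_mul_of_nonneg_right (norm_mul_le _ _) (norm_nonneg _))
      _ ≤ ‖X‖ ^ i * ‖exp (t • X)‖ * (‖Y‖ ^ j * ‖exp (t • Y)‖) * (‖exp (t • Z)‖ * ‖Z‖ ^ l) := by
          gcongr
          exacts [norm_pow_mul_le _ _ _, norm_pow_mul_le _ _ _, norm_mul_pow_le _ _ _]
      _ = _ := by ring
  | succ k ih =>
    calc ‖tripleExpDeriv X Y Z (k + 1) i j l t‖
        ≤ _ := norm_add₃_le.trans (add_le_add (add_le_add (ih _ _ _) (ih _ _ _)) (ih _ _ _))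
      _ = _ := by ring

/-- Only the second-order identity needs the outer factors to coincide: in general the
second derivative at `0` differs from `(X + Y + Z) ^ 2` by `[X, Y] + [X, Z] + [Y, Z]`. -/
theorem tripleExpDeriv_self_apply_zero (X Y : 𝔸) {k : ℕ} (hk : k ≤ 2) :
    tripleExpDeriv X Y X k 0 0 0 0 = (X + Y + X) ^ k := by
  interval_cases k
  · simp [tripleExpDeriv]
  · simp [tripleExpDeriv]
  · simp [tripleExpDeriv]
    noncomm_ring

end TripleExp

section Strang

variable {𝔸 : Type*} [NormedRing 𝔸] [NormedAlgebra ℝ 𝔸]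

noncomputable def strangErrorDeriv (X Y : 𝔸) (k : ℕ) (t : ℝ) : 𝔸 :=
  (X + Y + X) ^ k * exp (t • (X + Y + X)) - tripleExpDeriv X Y X k 0 0 0 t

theorem strangErrorDeriv_zero (X Y : 𝔸) (t : ℝ) :
    strangErrorDeriv X Y 0 t = exp (t • (X + Y + X)) - exp (t • X) * exp (t • Y) * exp (t • X) := by
  simp [strangErrorDeriv, tripleExpDeriv]

theorem hasDerivAt_strangErrorDeriv [CompleteSpace 𝔸] (X Y : 𝔸) (k : ℕ) (t : ℝ) :
    HasDerivAt (strangErrorDeriv X Y k) (strangErrorDeriv X Y (k + 1) t) t :=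
  (hasDerivAt_pow_mul_exp_smul _ k t).sub (hasDerivAt_tripleExpDeriv X Y X k 0 0 0 t)

theorem strangErrorDeriv_apply_zero (X Y : 𝔸) {k : ℕ} (hk : k ≤ 2) :
    strangErrorDeriv X Y k 0 = 0 := by
  rw [strangErrorDeriv, tripleExpDeriv_self_apply_zero X Y hk, zero_smul, exp_zero, mul_one,
    sub_self]

theorem norm_strangErrorDeriv_le (X Y : 𝔸) (k : ℕ) {t : ℝ} (ht : |t| ≤ 1) :
    ‖strangErrorDeriv X Y k t‖ ≤ (‖X‖ + ‖Y‖ + ‖X‖) ^ k *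
      (expNormBound 𝔸 (‖X‖ + ‖Y‖ + ‖X‖) + expNormBound 𝔸 (‖X‖ + ‖Y‖ + ‖X‖) ^ 3) := by
  set s := ‖X‖ + ‖Y‖ + ‖X‖
  set K := expNormBound 𝔸 s
  have hXs : ‖X‖ ≤ s := by simp only [s]; linarith [norm_nonneg X, norm_nonneg Y]
  have hYs : ‖Y‖ ≤ s := by simp only [s]; linarith [norm_nonneg X]
  have hAs : ‖X + Y + X‖ ≤ s := norm_add₃_le
  have hX := norm_exp_smul_le_expNormBound ht hXs
  have hY := norm_exp_smul_le_expNormBound ht hYs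
  have hA := norm_exp_smul_le_expNormBound ht hAs
  calc ‖strangErrorDeriv X Y k t‖
      ≤ ‖(X + Y + X) ^ k * exp (t • (X + Y + X))‖ + ‖tripleExpDeriv X Y X k 0 0 0 t‖ :=
        norm_sub_le _ _
    _ ≤ ‖X + Y + X‖ ^ k * ‖exp (t • (X + Y + X))‖ +
          s ^ k * (‖exp (t • X)‖ * ‖exp (t • Y)‖ * ‖exp (t • X)‖) :=
        add_le_add (norm_pow_mul_le _ _ _) (by simpa using norm_tripleExpDeriv_le X Y X k 0 0 0 t)
    _ ≤ s ^ k * K + s ^ k * (K * K * K) := by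
        have hK : 0 ≤ K := (norm_nonneg _).trans hX
        gcongr
    _ = s ^ k * (K + K ^ 3) := by ring

theorem norm_exp_smul_sub_strang_le [CompleteSpace 𝔸] (X Y : 𝔸) {h : ℝ} (h0 : 0 ≤ h)
    (h1 : h ≤ 1) :
    ‖exp (h • (X + Y + X)) - exp (h • X) * exp (h • Y) * exp (h • X)‖ ≤
      (‖X‖ + ‖Y‖ + ‖X‖) ^ 3 *
        (expNormBound 𝔸 (‖X‖ + ‖Y‖ + ‖X‖) + expNormBound 𝔸 (‖X‖ + ‖Y‖ + ‖X‖) ^ 3) * h ^ 3 := by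
  rw [← strangErrorDeriv_zero]
  exact norm_le_mul_pow_three_of_hasDerivAt (hasDerivAt_strangErrorDeriv X Y 0)
    (hasDerivAt_strangErrorDeriv X Y 1) (hasDerivAt_strangErrorDeriv X Y 2)
    (strangErrorDeriv_apply_zero X Y (by norm_num)) (strangErrorDeriv_apply_zero X Y (by norm_num))
    (strangErrorDeriv_apply_zero X Y le_rfl) h0
    fun t ht => norm_strangErrorDeriv_le X Y 3 (abs_le.2 ⟨by linarith [ht.1], ht.2.trans h1⟩)

end Strang

/-- Second-order accuracy of Strang splitting in a Banach algebra:
`‖exp(h(D+N)) − exp((h/2)D)·exp(hN)·exp((h/2)D)‖ ≤ C h³` for `0 ≤ h ≤ 1`, with a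
constant `C` depending only on `‖D‖` and `‖N‖`. -/
theorem strang_splitting_second_order (𝔸 : Type*) [NormedRing 𝔸] [NormedAlgebra ℝ 𝔸]
    [CompleteSpace 𝔸] :
    ∃ C : ℝ → ℝ → ℝ, ∀ D N : 𝔸, ∀ h : ℝ, 0 ≤ h → h ≤ 1 →
      ‖exp (h • (D + N)) - exp ((h / 2) • D) * exp (h • N) * exp ((h / 2) • D)‖ ≤
        C ‖D‖ ‖N‖ * h ^ 3 := by
  refine ⟨fun a b => (a + b) ^ 3 * (expNormBound 𝔸 (a + b) + expNormBound 𝔸 (a + b) ^ 3),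
    fun D N h h0 h1 => ?_⟩
  have hnorm : ‖(2⁻¹ : ℝ) • D‖ + ‖N‖ + ‖(2⁻¹ : ℝ) • D‖ = ‖D‖ + ‖N‖ := by
    rw [norm_smul]; norm_num; ring
  have hsum : (2⁻¹ : ℝ) • D + N + (2⁻¹ : ℝ) • D = D + N := by module
  have hhalf : h • (2⁻¹ : ℝ) • D = (h / 2) • D := by rw [smul_smul, div_eq_mul_inv]
  have key := norm_exp_smul_sub_strang_le ((2⁻¹ : ℝ) • D) N h0 h1
  rwa [hnorm, hsum, hhalf] at key
end
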